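/- Let C be an abelian category, X ⊆ C closed under extensions and direct summands, and T ⊆ C closed under direct summands satisfying (T1) pd_X(T) < ∞, (T2) T ∩ X ⊆ T^⊥, (T4) existence of a relative cogenerator α ⊆ X^⊥ ∩ T^⊥ in X, and (T5) existence of T-precovers in X for objects of X ∩ T^⊥. Then T satisfies (T3) (there is a relative generator ω in X with ω ⊆ T^∨_X) if and only if T^⊥ ∩ X ⊆ Fac^X_1(T) and there is a relative generator ω in X with ω ⊆ (T∩X)^∨_X. -/

import Mathlib

open CategoryTheory CategoryTheory.Limits CategoryTheory.Abelian ZeroObject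

universe w v u

namespace RelTilting

variable {C : Type u} [Category.{v} C] [Abelian C]

/-- `f`, `g` form a short exact sequence `0 → A → B → D → 0`. -/
def IsSES {A B D : C} (f : A ⟶ B) (g : B ⟶ D) : Prop :=
  ∃ w : f ≫ g = 0, (ShortComplex.mk f g w).ShortExact

/-- There is a short exact sequence `0 → A → B → D → 0`. -/
def SES (A B D : C) : Prop := ∃ (f : A ⟶ B) (g : B ⟶ D), IsSES f g

/-- A class of objects is closed under extensions. -/
def ExtClosed (P : C → Prop) : Prop :=
  ∀ ⦃A B D : C⦄, SES A B D → P A → P D → P B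

/-- A class of objects is closed under direct summands. -/
def SmdClosed (P : C → Prop) : Prop :=
  ∀ (A V : C), P V → (∃ (i : A ⟶ V) (r : V ⟶ A), i ≫ r = 𝟙 A) → P A

/-- A class of objects is closed under finite (binary) direct sums. -/
def SumClosed (P : C → Prop) : Prop :=
  ∀ (A B : C), P A → P B → P (A ⊞ B)

/-- A class is closed under CoCones (kernels of epis between its objects). -/
def CoConeClosed (P : C → Prop) : Prop :=
  ∀ ⦃A B D : C⦄, SES A B D → P B → P D → P A

/-- A class is left thick. -/
def LeftThick (P : C → Prop) : Prop :=
  ExtClosed P ∧ SmdClosed P ∧ CoConeClosed P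

variable [HasExt.{w} C]

/-- `Ext^i(A,B) = 0` for all `i ≥ 1`. -/
def extVanish (A B : C) : Prop := ∀ i : ℕ, 1 ≤ i → Subsingleton (Ext A B i)

/-- The right orthogonal class `T^⊥`. -/
def rightPerp (T : C → Prop) : C → Prop := fun B => ∀ A, T A → extVanish A B

/-- The left orthogonal class `^⊥S`. -/
def leftPerp (S : C → Prop) : C → Prop := fun A => ∀ B, S B → extVanish A B

/-- `pd_X(M) ≤ n`. -/
def pdLE (T X : C → Prop) (n : ℕ) : Prop :=
  ∀ M, T M → ∀ X', X X' → ∀ k, n < k → Subsingleton (Ext M X' k)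

/-- `M` has a finite coresolution of length `n` with middle terms in `B`
and cokernels in `A`, ending in `A ∩ B`. -/
def CoresLen (B A : C → Prop) : ℕ → C → Prop
  | 0 => fun M => B M ∧ A M
  | (n+1) => fun M => ∃ Y0 N0 : C, B Y0 ∧ A N0 ∧ SES M Y0 N0 ∧ CoresLen B A n N0

/-- The coresolution dimension of `M` (with middle terms in `B`,
cokernels in `A`) equals `n`. -/
def CoresDimEq (B A : C → Prop) (M : C) (n : ℕ) : Prop :=
  CoresLen B A n M ∧ ∀ m : ℕ, m < n → ¬ CoresLen B A m M

/-- Specification of an infinite coresolution of `M` with middle terms `Yk`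
(in `B ∪ {0}`) and cokernels `Nk` (in `A ∪ {0}`). -/
def InfCoresSpec (B A : C → Prop) (M : C) (Yk Nk : ℕ → C) : Prop :=
  (∀ k, B (Yk k) ∨ IsZero (Yk k)) ∧ (∀ k, A (Nk k) ∨ IsZero (Nk k)) ∧
    SES M (Yk 0) (Nk 0) ∧ ∀ k, SES (Nk k) (Yk (k+1)) (Nk (k+1))

/-- `M` has a (possibly infinite) coresolution with middle terms in `B ∪ {0}`
and cokernels in `A ∪ {0}`. -/
def InfCores (B A : C → Prop) (M : C) : Prop :=
  ∃ Yk Nk : ℕ → C, InfCoresSpec B A M Yk Nk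

/-- The class `(A,B)^∨_∞`. -/
def PairVeeInf (A B : C → Prop) (M : C) : Prop := A M ∧ InfCores B A M

/-- `coresdim^A_B(M) ≤ n`, via infinite coresolutions vanishing beyond `n`. -/
def InfCoresDimLE (B A : C → Prop) (M : C) (n : ℕ) : Prop :=
  ∃ Yk Nk : ℕ → C, InfCoresSpec B A M Yk Nk ∧ ∀ k, n < k → IsZero (Yk k)

/-- The class `T^∨` of objects with a finite coresolution by objects of `T`. -/
def Vee (T : C → Prop) : C → Prop := fun M => ∃ n, CoresLen T (fun _ => True) n M

/-- The class `T^∨_X`. -/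
def VeeRel (T X : C → Prop) : C → Prop := fun M => ∃ n, CoresLen T X n M

/-- `ω` is a relative generator in `X`. -/
def RelGen (ω X : C → Prop) : Prop :=
  (∀ W, ω W → X W) ∧ ∀ X0, X X0 → ∃ X' W : C, X X' ∧ ω W ∧ SES X' W X0

/-- `α` is a relative cogenerator in `X`. -/
def RelCogen (α X : C → Prop) : Prop :=
  (∀ I, α I → X I) ∧ ∀ X0, X X0 → ∃ I X' : C, α I ∧ X X' ∧ SES X0 I X'

/-- `f : T' ⟶ Z` is a `T`-precover of `Z`. -/
def IsPrecover (T : C → Prop) {T' Z : C} (f : T' ⟶ Z) : Prop :=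
  T T' ∧ ∀ T'' : C, T T'' → ∀ h : T'' ⟶ Z, ∃ k : T'' ⟶ T', k ≫ f = h

/-- `g : Z ⟶ M` is an `X`-preenvelope of `Z`. -/
def IsPreenvelope (X : C → Prop) {Z M : C} (g : Z ⟶ M) : Prop :=
  X M ∧ ∀ X' : C, X X' → ∀ h : Z ⟶ X', ∃ k : M ⟶ X', g ≫ k = h

/-- The class `Fac^X_n(T)`. -/
def Fac (T X : C → Prop) : ℕ → C → Prop
  | 0 => fun _ => True
  | (n+1) => fun M => ∃ K T1 : C, X K ∧ (T T1 ∧ X T1) ∧ SES K T1 M ∧ Fac T X n K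

/-- `Y` is closed by `n`-quotients in `X`. -/
def ClosedByNQuotients (Y X : C → Prop) (n : ℕ) : Prop :=
  ∀ (K Ymid : ℕ → C), X (K 0) →
    (∀ i, 1 ≤ i → i ≤ n → Y (Ymid i) ∧ X (K i) ∧ SES (K i) (Ymid i) (K (i-1))) →
    Y (K 0)

end RelTilting

/-!
For `A ∈ T^⊥ ∩ X`, write `A` as a quotient `W → A` of an object `W` of the relative generator
`ω`, with kernel in `X`, and take the first step `0 → W → Y → N → 0` of a `T_X`-coresolution of
`W`. Since `N` has a finite `T`-coresolution, `Ext¹(N, A) = 0`, so `W → A` extends to an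
epimorphism `h : Y → A`; its kernel is an extension of `N` by the kernel of `W → A`, hence lies
in `X`, and `Y ∈ T ∩ X`. This gives `A ∈ Fac^X_1(T)`. Along the coresolution of an object of `X`
all middle terms lie in `X` by extension closure, so `T^∨_X` and `(T ∩ X)^∨_X` agree on `X`.
-/

namespace RelTilting

section

variable {C : Type u} [Category.{v} C] [Abelian C]

lemma ses_kernel_of_epi {Y A : C} (h : Y ⟶ A) [Epi h] : SES (kernel h) Y A :=
  ⟨kernel.ι h, h, kernel.condition h, ⟨ShortComplex.exact_of_f_is_kernel _ (kernelIsKernel h)⟩⟩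

/-- If `ι ≫ h = g` with `ι` a monomorphism, then `0 → ker g → ker h → coker ι → 0` is exact. -/
lemma ses_kernel_of_comp_eq {X' W A Y N : C} {i : X' ⟶ W} {g : W ⟶ A} {ι : W ⟶ Y}
    {p : Y ⟶ N} (hig : IsSES i g) (hιp : IsSES ι p) {h : Y ⟶ A} (hh : ι ≫ h = g) :
    SES X' (kernel h) N := by
  obtain ⟨wig, hig⟩ := hig
  obtain ⟨wιp, hιp⟩ := hιp
  have := hig.epi_g
  have := hιp.mono_f
  have := hig.mono_f
  have := hιp.epi_g
  let a : X' ⟶ kernel h := kernel.lift h (i ≫ ι) (by rw [Category.assoc, hh, wig])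
  have ha : a ≫ kernel.ι h = i ≫ ι := kernel.lift_ι _ _ _
  have wab : a ≫ kernel.ι h ≫ p = 0 := by
    rw [← Category.assoc, ha, Category.assoc, wιp, comp_zero]
  have : Mono a := mono_of_mono_fac ha
  have : Epi (kernel.ι h ≫ p) := by
    rw [epi_iff_surjective_up_to_refinements]
    intro B y
    obtain ⟨B₁, π₁, _, t, ht⟩ := surjective_up_to_refinements_of_epi p y
    obtain ⟨B₂, π₂, _, s, hs⟩ := surjective_up_to_refinements_of_epi g (t ≫ h)
    refine ⟨B₂, π₂ ≫ π₁, epi_comp _ _, kernel.lift h (π₂ ≫ t - s ≫ ι) ?_, ?_⟩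
    · simp [hh, ← hs]
    · simp [wιp, ht]
  refine ⟨a, kernel.ι h ≫ p, wab, ⟨?_⟩⟩
  rw [ShortComplex.exact_iff_exact_up_to_refinements]
  intro B c hc
  obtain ⟨B₁, π₁, _, s, hs⟩ := hιp.exact.exact_up_to_refinements (c ≫ kernel.ι h)
    (by simpa using hc)
  have hsg : s ≫ g = 0 := by
    have := congrArg (· ≫ h) hs
    simp only [Category.assoc, kernel.condition, comp_zero] at this
    simp [← hh, ← this]
  obtain ⟨B₂, π₂, _, x, hx⟩ := hig.exact.exact_up_to_refinements s hsg
  refine ⟨B₂, π₂ ≫ π₁, epi_comp _ _, x, ?_⟩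
  rw [← cancel_mono (kernel.ι h)]
  simp only [Category.assoc, ha]
  rw [hs, ← Category.assoc, hx, Category.assoc]

variable {B B' T X : C → Prop}

lemma CoresLen.mono (hBB' : ∀ Y, B Y → B' Y) :
    ∀ {n : ℕ} {M : C}, CoresLen B X n M → CoresLen B' X n M
  | 0, _, ⟨hB, hX⟩ => ⟨hBB' _ hB, hX⟩
  | _ + 1, _, ⟨Y, N, hY, hN, hs, hr⟩ => ⟨Y, N, hBB' Y hY, hN, hs, hr.mono hBB'⟩

lemma CoresLen.inter (hXext : ExtClosed X) :
    ∀ {n : ℕ} {M : C}, X M → CoresLen T X n M → CoresLen (fun A => T A ∧ X A) X n M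
  | 0, _, hM, ⟨hT, hX⟩ => ⟨⟨hT, hM⟩, hX⟩
  | _ + 1, _, hM, ⟨Y, N, hY, hN, hs, hr⟩ =>
    ⟨Y, N, ⟨hY, hXext hs hM hN⟩, hN, hs, hr.inter hXext hN⟩

lemma VeeRel.mono {M : C} (hBB' : ∀ Y, B Y → B' Y) : VeeRel B X M → VeeRel B' X M
  | ⟨n, hn⟩ => ⟨n, hn.mono hBB'⟩

lemma VeeRel.inter (hXext : ExtClosed X) {M : C} (hM : X M) :
    VeeRel T X M → VeeRel (fun A => T A ∧ X A) X M
  | ⟨n, hn⟩ => ⟨n, hn.inter hXext hM⟩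

end

variable {C : Type u} [Category.{v} C] [Abelian C] [HasExt.{w} C] {T X : C → Prop}

lemma IsSES.exists_comp_eq {W Y N A : C} {ι : W ⟶ Y} {p : Y ⟶ N} (hιp : IsSES ι p)
    (hN : Subsingleton (Ext.{w} N A 1)) (g : W ⟶ A) : ∃ h : Y ⟶ A, ι ≫ h = g := by
  obtain ⟨_, hιp⟩ := hιp
  obtain ⟨x, hx⟩ := Ext.contravariant_sequence_exact₁ hιp A (Ext.mk₀ g) rfl
    (Subsingleton.elim _ _)
  obtain ⟨h, rfl⟩ := (Ext.mk₀_bijective Y A).2 x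
  exact ⟨h, (Ext.mk₀_bijective W A).1 (by simpa using hx)⟩

lemma CoresLen.extVanish {A : C} (hA : rightPerp T A) :
    ∀ {n : ℕ} {M : C}, CoresLen T X n M → extVanish M A
  | 0, M, ⟨hT, _⟩ => hA M hT
  | _ + 1, _, ⟨Y, N, hY, _, ⟨_, _, _, hs⟩, hr⟩ => by
    intro k hk
    have := hA Y hY k hk
    have := hr.extVanish hA (1 + k) (by omega)
    refine subsingleton_of_forall_eq 0 fun x => ?_
    obtain ⟨x', rfl⟩ := Ext.contravariant_sequence_exact₁ hs A x rfl (Subsingleton.elim _ _)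
    rw [Subsingleton.elim x' 0, Ext.comp_zero]

lemma fac_one_of_relGen {ω : C → Prop} (hXext : ExtClosed X) (hω : RelGen ω X)
    (hωT : ∀ W, ω W → VeeRel T X W) {A : C} (hA : rightPerp T A) (hAX : X A) :
    Fac T X 1 A := by
  obtain ⟨X', W, hX', hW, i, g, hig⟩ := hω.2 A hAX
  obtain ⟨n, hcores⟩ := hωT W hW
  cases n with
  | zero => exact ⟨X', W, hX', hcores, ⟨i, g, hig⟩, trivial⟩
  | succ n =>
    obtain ⟨Y, N, hY, hN, ⟨ι, p, hιp⟩, hr⟩ := hcores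
    obtain ⟨h, hh⟩ := hιp.exists_comp_eq (hr.extVanish hA 1 le_rfl) g
    have : Epi h := by
      have := hig.2.epi_g
      exact epi_of_epi_fac hh
    refine ⟨kernel h, Y, hXext (ses_kernel_of_comp_eq hig hιp hh) hX' hN,
      ⟨hY, hXext ⟨ι, p, hιp⟩ (hω.1 W hW) hN⟩, ses_kernel_of_epi h, trivial⟩

theorem stmt14_general (X T : C → Prop)
    (hXext : ExtClosed X) :
    (∃ ω : C → Prop, RelGen ω X ∧ ∀ W, ω W → VeeRel T X W) ↔
      ((∀ A, rightPerp T A → X A → Fac T X 1 A) ∧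
        ∃ ω : C → Prop, RelGen ω X ∧ ∀ W, ω W → VeeRel (fun A => T A ∧ X A) X W) := by
  constructor
  · rintro ⟨ω, hω, hωT⟩
    exact ⟨fun A hA hAX => fac_one_of_relGen hXext hω hωT hA hAX,
      ω, hω, fun W hW => (hωT W hW).inter hXext (hω.1 W hW)⟩
  · rintro ⟨-, ω, hω, hωT⟩
    exact ⟨ω, hω, fun W hW => (hωT W hW).mono fun _ => And.left⟩

theorem stmt14 (X T : C → Prop)
    (hXext : ExtClosed X) (hXsmd : SmdClosed X) (hTsmd : SmdClosed T)
    (hT1 : ∃ n : ℕ, pdLE T X n)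
    (hT2 : ∀ M, T M → X M → rightPerp T M)
    (hT4 : ∃ α : C → Prop, (∀ I, α I → rightPerp X I ∧ rightPerp T I) ∧ RelCogen α X)
    (hT5 : ∀ Z, X Z → rightPerp T Z → ∃ (T' : C) (f : T' ⟶ Z), IsPrecover T f ∧ X T') :
    (∃ ω : C → Prop, RelGen ω X ∧ ∀ W, ω W → VeeRel T X W) ↔
      ((∀ A, rightPerp T A → X A → Fac T X 1 A) ∧
        ∃ ω : C → Prop, RelGen ω X ∧ ∀ W, ω W → VeeRel (fun A => T A ∧ X A) X W) :=
  stmt14_general X T hXext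

end RelTilting
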